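/- arXiv:1203.3995 — 4 statements merged into one kernel-verified Lean document; each statement's English description precedes it below -/
import Mathlib

section
/- Let n ≥ 2 and let u : ℂⁿ → ℝ be a continuous subharmonic function with 0 ≤ u ≤ 1 and sup_{ℂⁿ} u = 1. Then for every z ∈ ℂⁿ, lim_{r→∞} [u]_r(z) = 1 and lim_{r→∞} [u²]_r(z) = 1. -/
open MeasureTheory Metric Filter

noncomputable section

instance (n : ℕ) : MeasurableSpace (EuclideanSpace ℂ (Fin n)) := borel _
instance (n : ℕ) : BorelSpace (EuclideanSpace ℂ (Fin n)) := ⟨rfl⟩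

/-!
The ball averages never exceed `sup u`. Conversely, pick `z₀` with `u z₀` close to
`sup u` and put `d = |z - z₀|`. Since `B(z₀, r - d) ⊆ B(z, r)`, `u ≥ 0` and `u` has the
sub-mean-value property on `B(z₀, r - d)`, the average over `B(z, r)` is at least
`((r - d) / r) ^ (2n) * u z₀`, which tends to `u z₀`. For `u²`, Jensen's inequality gives
`[u]_r² ≤ [u²]_r ≤ 1`.
-/

open Set Topology

section ProperSpace

variable {X : Type*} [MetricSpace X] [ProperSpace X] [MeasurableSpace X]
  [OpensMeasurableSpace X] (μ : Measure X) [IsFiniteMeasureOnCompacts μ]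
  {f : X → ℝ} {z : X} {r : ℝ}

theorem Continuous.integrableOn_ball (hf : Continuous f) : IntegrableOn f (ball z r) μ :=
  (hf.continuousOn.integrableOn_compact (isCompact_closedBall z r)).mono_set ball_subset_closedBall

theorem setAverage_ball_le_of_forall_le [μ.IsOpenPosMeasure] {M : ℝ} (hf : Continuous f)
    (hM : ∀ x, f x ≤ M) (hr : 0 < r) : ⨍ x in ball z r, f x ∂μ ≤ M :=
  (convex_Iic M).set_average_mem isClosed_Iic (measure_ball_pos μ z hr).ne'
    measure_ball_lt_top.ne (ae_of_all _ hM) (hf.integrableOn_ball μ)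

theorem sq_setAverage_ball_le [μ.IsOpenPosMeasure] (hf : Continuous f) (hr : 0 < r) :
    (⨍ x in ball z r, f x ∂μ) ^ 2 ≤ ⨍ x in ball z r, f x ^ 2 ∂μ :=
  (even_two.convexOn_pow (𝕜 := ℝ)).map_set_average_le (continuous_pow 2).continuousOn
    isClosed_univ (measure_ball_pos μ z hr).ne' measure_ball_lt_top.ne
    (ae_of_all _ fun _ ↦ mem_univ _) (hf.integrableOn_ball μ) ((hf.pow 2).integrableOn_ball μ)

end ProperSpace

section AddHaar

variable {E : Type*} [NormedAddCommGroup E] [NormedSpace ℝ E] [FiniteDimensional ℝ E]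
  [MeasurableSpace E] [BorelSpace E] (μ : Measure E) [μ.IsAddHaarMeasure]

open Module

theorem addHaar_real_ball_of_pos (x : E) {r : ℝ} (hr : 0 < r) :
    μ.real (ball x r) = r ^ finrank ℝ E * μ.real (ball 0 1) := by
  rw [measureReal_def, Measure.addHaar_ball_of_pos μ x hr, ENNReal.toReal_mul,
    ENNReal.toReal_ofReal (by positivity), measureReal_def]

theorem div_pow_finrank_mul_setAverage_le {u : E → ℝ} (hu0 : ∀ x, 0 ≤ u x) {z z₀ : E} {r s : ℝ}
    (hu : IntegrableOn u (ball z r) μ) (hs : 0 < s) (hsub : ball z₀ s ⊆ ball z r) :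
    (s / r) ^ finrank ℝ E * ⨍ x in ball z₀ s, u x ∂μ ≤ ⨍ x in ball z r, u x ∂μ := by
  have hr : 0 < r := pos_of_mem_ball (hsub (mem_ball_self hs))
  have hunit : 0 < μ.real (ball (0 : E) 1) :=
    ENNReal.toReal_pos (measure_ball_pos μ 0 one_pos).ne' measure_ball_lt_top.ne
  have hratio : (s / r) ^ finrank ℝ E = μ.real (ball z₀ s) / μ.real (ball z r) := by
    rw [addHaar_real_ball_of_pos μ z₀ hs, addHaar_real_ball_of_pos μ z hr, div_pow]
    field_simp
  calc (s / r) ^ finrank ℝ E * ⨍ x in ball z₀ s, u x ∂μ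
      = (μ.real (ball z₀ s) • ⨍ x in ball z₀ s, u x ∂μ) / μ.real (ball z r) := by
        rw [hratio, smul_eq_mul]; ring
    _ = (∫ x in ball z₀ s, u x ∂μ) / μ.real (ball z r) := by
        rw [measure_smul_setAverage _ measure_ball_lt_top.ne]
    _ ≤ (∫ x in ball z r, u x ∂μ) / μ.real (ball z r) :=
        div_le_div_of_nonneg_right
          (setIntegral_mono_set hu (ae_of_all _ hu0) hsub.eventuallyLE) measureReal_nonneg
    _ = ⨍ x in ball z r, u x ∂μ := by
        rw [setAverage_eq, smul_eq_mul, div_eq_inv_mul]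

theorem tendsto_sub_const_div_atTop (d : ℝ) : Tendsto (fun r : ℝ ↦ (r - d) / r) atTop (𝓝 1) := by
  have h := tendsto_const_nhds (x := (1 : ℝ)).sub (tendsto_inv_atTop_zero.const_mul d)
  rw [mul_zero, sub_zero] at h
  refine h.congr' ?_
  filter_upwards [eventually_ne_atTop 0] with r hr
  field_simp

theorem tendsto_setAverage_ball_of_isLUB {u : E → ℝ} {M : ℝ} (hcont : Continuous u)
    (hu0 : ∀ x, 0 ≤ u x) (hsub : ∀ z r, 0 < r → u z ≤ ⨍ w in ball z r, u w ∂μ)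
    (hM : IsLUB (range u) M) (z : E) :
    Tendsto (fun r ↦ ⨍ w in ball z r, u w ∂μ) atTop (𝓝 M) := by
  refine tendsto_order.2 ⟨fun b hb ↦ ?_, fun b hb ↦ ?_⟩
  · obtain ⟨-, ⟨z₀, rfl⟩, hbz₀, -⟩ := hM.exists_between hb
    set d := dist z z₀
    have hlow : Tendsto (fun r ↦ ((r - d) / r) ^ finrank ℝ E * u z₀) atTop (𝓝 (u z₀)) := by
      simpa using ((tendsto_sub_const_div_atTop d).pow (finrank ℝ E)).mul_const (u z₀)
    filter_upwards [hlow.eventually_const_lt hbz₀, eventually_gt_atTop d] with r hb hr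
    have hrd : 0 < r - d := sub_pos.2 hr
    calc b < ((r - d) / r) ^ finrank ℝ E * u z₀ := hb
      _ ≤ ((r - d) / r) ^ finrank ℝ E * ⨍ w in ball z₀ (r - d), u w ∂μ := by
          have hr0 : 0 < r := hrd.trans_le (sub_le_self r dist_nonneg)
          gcongr
          exact hsub z₀ (r - d) hrd
      _ ≤ ⨍ w in ball z r, u w ∂μ :=
          div_pow_finrank_mul_setAverage_le μ hu0 (hcont.integrableOn_ball μ) hrd
            (ball_subset_ball' (by rw [dist_comm]; linarith))
  · filter_upwards [eventually_gt_atTop 0] with r hr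
    exact (setAverage_ball_le_of_forall_le μ hcont (fun x ↦ hM.1 (mem_range_self x)) hr).trans_lt hb

end AddHaar

theorem ball_averages_tendsto_sup_general
    (n : ℕ)
    (u : EuclideanSpace ℂ (Fin n) → ℝ)
    (hcont : Continuous u)
    (h01 : ∀ z, 0 ≤ u z ∧ u z ≤ 1)
    (hsh : ∀ z r, 0 < r → u z ≤ ⨍ w in ball z r, u w)
    (hsup : IsLUB (Set.range u) 1) :
    ∀ z, Tendsto (fun r : ℝ => ⨍ w in ball z r, u w) atTop (nhds 1) ∧
      Tendsto (fun r : ℝ => ⨍ w in ball z r, (u w) ^ 2) atTop (nhds 1) := by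
  intro z
  have hu := tendsto_setAverage_ball_of_isLUB volume hcont (fun w ↦ (h01 w).1) hsh hsup z
  refine ⟨hu, tendsto_of_tendsto_of_tendsto_of_le_of_le' (by simpa using hu.pow 2)
    tendsto_const_nhds ?_ ?_⟩
  · filter_upwards [eventually_gt_atTop 0] with r hr
    exact sq_setAverage_ball_le volume hcont hr
  · filter_upwards [eventually_gt_atTop 0] with r hr
    exact setAverage_ball_le_of_forall_le volume (hcont.pow 2)
      (fun w ↦ pow_le_one₀ (h01 w).1 (h01 w).2) hr

/-- For a continuous subharmonic `u : ℂⁿ → ℝ` (`n ≥ 2`) with `0 ≤ u ≤ 1` and `sup u = 1`,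
the ball averages of `u` and of `u²` both tend to `1` as the radius tends to infinity,
at every center `z`. -/
theorem ball_averages_tendsto_sup
    (n : ℕ) (hn : 2 ≤ n)
    (u : EuclideanSpace ℂ (Fin n) → ℝ)
    (hcont : Continuous u)
    (h01 : ∀ z, 0 ≤ u z ∧ u z ≤ 1)
    (hsh : ∀ z r, 0 < r → u z ≤ ⨍ w in ball z r, u w)
    (hsup : IsLUB (Set.range u) 1) :
    ∀ z, Tendsto (fun r : ℝ => ⨍ w in ball z r, u w) atTop (nhds 1) ∧
      Tendsto (fun r : ℝ => ⨍ w in ball z r, (u w) ^ 2) atTop (nhds 1) :=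
  ball_averages_tendsto_sup_general n u hcont h01 hsh hsup
end
end

section
/- Let A be an n×n complex Hermitian matrix whose eigenvalue vector λ(A) lies in Γ̄_m (1 ≤ m ≤ n), and let P be an n×n complex positive semidefinite Hermitian matrix. Then the eigenvalue vector λ(A + P) of A + P lies in Γ̄_m. -/
open scoped ComplexOrder

noncomputable section

/-- `σ_k(λ)`, the `k`-th elementary symmetric polynomial of `λ ∈ ℝⁿ`. -/
def esymm (n k : ℕ) (lam : Fin n → ℝ) : ℝ :=
  ∑ s ∈ Finset.univ.powersetCard k, ∏ i ∈ s, lam i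

/-- The Gårding cone `Γ_m = {λ ∈ ℝⁿ : σ_1(λ) > 0, …, σ_m(λ) > 0}`. -/
def gardingCone (n m : ℕ) : Set (Fin n → ℝ) :=
  {lam | ∀ k, 1 ≤ k → k ≤ m → 0 < esymm n k lam}

/-!
Diagonalise `A = U diag(λ) Uᴴ` and write `P = ∑ⱼ vⱼ vⱼᴴ`; it suffices to add one rank-one term at
a time. For `w = Uᴴ v` the matrix determinant lemma, applied to `diag(λ) + w wᴴ`, gives
`σ_k(λ(A + v vᴴ)) = σ_k(λ) + ∑ᵢ |wᵢ|² σ_{k-1}(λ | i)`, where `λ | i` omits the entry `λᵢ`.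
As `Γ̄_m = {σ_1, …, σ_m ≥ 0}`, what remains is the restriction property of the Gårding cones:
`σ_1(λ), …, σ_k(λ) ≥ 0` implies `σ_{k-1}(λ | i) ≥ 0`.

This is proved by strong induction on `k`. If `σ_{k-1}(λ | i) < 0`, shift `λ` by the `t > 0` at
which `σ_{k-1}((λ + t) | i)` vanishes; the shift makes `σ_1, …, σ_k` positive, because
`d/dt σ_j(λ + t) = (n - j + 1) σ_{j-1}(λ + t)`. For `μ = (λ + t) | i`, the vanishing of
`σ_{k-1}(μ)` turns `k σ_k(μ) = ∑_l μ_l σ_{k-1}(μ | l)` into `k σ_k(μ) = -∑_l μ_l² σ_{k-2}(μ | l)`,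
which is `≤ 0` by induction. Hence `σ_k(λ + t) = σ_k(μ) + (λᵢ + t) σ_{k-1}(μ) ≤ 0`, a
contradiction.
-/

open Finset Polynomial Matrix

section ElementarySymmetric

variable {ι R : Type*}

def esymmOn [CommSemiring R] (u : Finset ι) (k : ℕ) (f : ι → R) : R :=
  ∑ s ∈ u.powersetCard k, ∏ i ∈ s, f i

@[simp]
lemma esymmOn_zero [CommSemiring R] (u : Finset ι) (f : ι → R) : esymmOn u 0 f = 1 := by
  simp [esymmOn]

lemma map_esymmOn {S : Type*} [CommSemiring R] [CommSemiring S] (φ : R →+* S) (u : Finset ι)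
    (k : ℕ) (f : ι → R) : φ (esymmOn u k f) = esymmOn u k (fun i => φ (f i)) := by
  simp [esymmOn, map_sum, map_prod]

lemma coeff_prod_X_sub_C_eq_esymmOn [CommRing R] (u : Finset ι) (a : ι → R) {j k : ℕ}
    (h : j + k = #u) :
    (∏ i ∈ u, (X - C (a i))).coeff j = (-1) ^ k * esymmOn u k a := by
  simp_rw [sub_eq_add_neg, ← C_neg]
  rw [prod_X_add_C_coeff _ _ (by omega), show #u - j = k by omega, esymmOn, mul_sum]
  refine sum_congr rfl fun s hs => ?_
  rw [prod_neg, (mem_powersetCard.1 hs).2]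

lemma continuous_esymmOn_add_const (u : Finset ι) (k : ℕ) (f : ι → ℝ) :
    Continuous fun t : ℝ => esymmOn u k (fun i => f i + t) := by
  unfold esymmOn; fun_prop

lemma esymmOn_pos_of_pos {u : Finset ι} {k : ℕ} (hk : k ≤ #u) {f : ι → ℝ}
    (hf : ∀ i ∈ u, 0 < f i) : 0 < esymmOn u k f :=
  sum_pos (fun _ hs => prod_pos fun i hi => hf i ((mem_powersetCard.1 hs).1 hi))
    (powersetCard_nonempty.2 hk)

lemma exists_pos_esymmOn_add_const_eq_zero {u : Finset ι} {k : ℕ} (hk : k ≤ #u)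
    {f : ι → ℝ} (hneg : esymmOn u k f < 0) : ∃ s > 0, esymmOn u k (fun i => f i + s) = 0 := by
  set s₁ := 1 + ∑ i ∈ u, |f i|
  have hs₁ : 0 < esymmOn u k (fun i => f i + s₁) := by
    refine esymmOn_pos_of_pos hk fun i hi => ?_
    have := single_le_sum (fun j _ => abs_nonneg (f j)) hi
    linarith [neg_abs_le (f i)]
  obtain ⟨s, hs, hs0⟩ := intermediate_value_Ioo (by positivity : (0 : ℝ) ≤ s₁)
    (continuous_esymmOn_add_const u k f).continuousOn (by simpa using ⟨hneg, hs₁⟩)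
  exact ⟨s, hs.1, hs0⟩

variable [DecidableEq ι]

lemma esymmOn_insert [CommSemiring R] {a : ι} {u : Finset ι} (ha : a ∉ u) (k : ℕ)
    (f : ι → R) :
    esymmOn (insert a u) (k + 1) f = esymmOn u (k + 1) f + f a * esymmOn u k f := by
  rw [esymmOn, powersetCard_succ_insert ha, sum_union, sum_image, esymmOn, esymmOn, mul_sum]
  · congr 1
    refine sum_congr rfl fun _ hs => prod_insert fun has => ha ?_
    exact (mem_powersetCard.1 hs).1 has
  · intro s hs t ht hst
    have hs' : a ∉ s := fun h => ha ((mem_powersetCard.1 hs).1 h)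
    have ht' : a ∉ t := fun h => ha ((mem_powersetCard.1 ht).1 h)
    rw [← erase_insert hs', ← erase_insert ht']
    exact congrArg (·.erase a) hst
  · refine disjoint_left.2 fun s hs hs' => ?_
    obtain ⟨t, -, rfl⟩ := mem_image.1 hs'
    exact ha ((mem_powersetCard.1 hs).1 (mem_insert_self a t))

lemma esymmOn_succ_eq_erase [CommSemiring R] {i : ι} {u : Finset ι} (hi : i ∈ u) (k : ℕ)
    (f : ι → R) :
    esymmOn u (k + 1) f = esymmOn (u.erase i) (k + 1) f + f i * esymmOn (u.erase i) k f := by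
  conv_lhs => rw [← insert_erase hi]
  exact esymmOn_insert (notMem_erase i u) k f

lemma sum_powersetCard_succ_sum_erase {M : Type*} [AddCommMonoid M] (u : Finset ι) (k : ℕ)
    (F : ι → Finset ι → M) :
    ∑ s ∈ u.powersetCard (k + 1), ∑ i ∈ s, F i (s.erase i)
      = ∑ i ∈ u, ∑ t ∈ (u.erase i).powersetCard k, F i t := by
  rw [sum_sigma', sum_sigma']
  refine sum_bij' (fun p _ => ⟨p.2, p.1.erase p.2⟩) (fun p _ => ⟨insert p.1 p.2, p.1⟩)
    ?_ ?_ ?_ ?_ fun _ _ => rfl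
  · rintro ⟨s, i⟩ hp
    simp only [mem_sigma, mem_powersetCard] at hp ⊢
    refine ⟨hp.1.1 hp.2, erase_subset_erase i hp.1.1, ?_⟩
    rw [card_erase_of_mem hp.2, hp.1.2, Nat.add_sub_cancel]
  · rintro ⟨i, t⟩ hp
    simp only [mem_sigma, mem_powersetCard, subset_erase] at hp ⊢
    exact ⟨⟨insert_subset hp.1 hp.2.1.1, card_insert_of_notMem hp.2.1.2 ▸ hp.2.2 ▸ rfl⟩,
      mem_insert_self i t⟩
  · rintro ⟨s, i⟩ hp
    simp only [mem_sigma] at hp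
    simp [insert_erase hp.2]
  · rintro ⟨i, t⟩ hp
    simp only [mem_sigma, mem_powersetCard, subset_erase] at hp
    simp [erase_insert hp.2.1.2]

lemma sum_mul_esymmOn_erase [CommSemiring R] (u : Finset ι) (k : ℕ) (f : ι → R) :
    ∑ i ∈ u, f i * esymmOn (u.erase i) k f = (k + 1) * esymmOn u (k + 1) f := by
  simp_rw [esymmOn, mul_sum,
    ← sum_powersetCard_succ_sum_erase u k fun i t => f i * ∏ j ∈ t, f j]
  refine sum_congr rfl fun s hs => ?_
  rw [sum_congr rfl fun i hi => mul_prod_erase s f hi, sum_const, (mem_powersetCard.1 hs).2,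
    nsmul_eq_mul]
  push_cast; ring

lemma sum_esymmOn_erase [CommRing R] (u : Finset ι) (k : ℕ) (f : ι → R) :
    ∑ i ∈ u, esymmOn (u.erase i) k f = (#u - k) * esymmOn u k f := by
  cases k with
  | zero => simp
  | succ k =>
    have h := sum_mul_esymmOn_erase u k f
    rw [sum_congr rfl fun i hi => eq_sub_of_add_eq (esymmOn_succ_eq_erase hi k f).symm,
      sum_sub_distrib, h, sum_const, nsmul_eq_mul]
    push_cast; ring

lemma hasDerivAt_esymmOn_add_const (u : Finset ι) (k : ℕ) (f : ι → ℝ) (t : ℝ) :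
    HasDerivAt (fun t => esymmOn u (k + 1) (fun i => f i + t))
      ((#u - k) * esymmOn u k (fun i => f i + t)) t := by
  have h := HasDerivAt.fun_sum fun (s : Finset ι) (_ : s ∈ u.powersetCard (k + 1)) =>
    HasDerivAt.fun_finsetProd (u := s) (f' := fun _ => 1) fun i _ =>
      (hasDerivAt_id' t).const_add (f i)
  simp only [smul_eq_mul, mul_one] at h
  rw [sum_powersetCard_succ_sum_erase u k fun _ s => ∏ j ∈ s, (f j + t)] at h
  rwa [← sum_esymmOn_erase]

lemma esymmOn_add_const_pos {u : Finset ι} {k : ℕ} (hk : k ≤ #u) {f : ι → ℝ}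
    (hf : ∀ j ≤ k, 0 ≤ esymmOn u j f) {t : ℝ} (ht : 0 < t) :
    0 < esymmOn u k (fun i => f i + t) := by
  induction k generalizing t with
  | zero => simp
  | succ k ih =>
    have hmono : StrictMonoOn (fun t => esymmOn u (k + 1) (fun i => f i + t)) (Set.Ici 0) := by
      refine strictMonoOn_of_hasDerivWithinAt_pos (convex_Ici 0)
        (continuous_esymmOn_add_const u (k + 1) f).continuousOn
        (fun s _ => (hasDerivAt_esymmOn_add_const u k f s).hasDerivWithinAt) fun s hs => ?_
      rw [interior_Ici] at hs
      have hcard : (k : ℝ) < #u := by exact_mod_cast hk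
      exact mul_pos (by linarith) (ih (by omega) (fun j hj => hf j (by omega)) hs)
    have h0 := hmono Set.self_mem_Ici ht.le ht
    simp only [add_zero] at h0
    exact (hf (k + 1) le_rfl).trans_lt h0

lemma esymmOn_succ_succ_nonpos {u : Finset ι} {k : ℕ} {f : ι → ℝ}
    (h0 : esymmOn u (k + 1) f = 0) (h : ∀ l ∈ u, 0 ≤ esymmOn (u.erase l) k f) :
    esymmOn u (k + 2) f ≤ 0 := by
  have hexpand : ((k : ℝ) + 2) * esymmOn u (k + 2) f
      = -∑ l ∈ u, f l ^ 2 * esymmOn (u.erase l) k f := by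
    rw [← neg_one_mul, mul_sum]
    convert! (sum_mul_esymmOn_erase u (k + 1) f).symm using 1
    · push_cast; ring
    refine sum_congr rfl fun l hl => ?_
    linear_combination (-f l) * (esymmOn_succ_eq_erase hl k f).symm.trans h0
  have : 0 ≤ ∑ l ∈ u, f l ^ 2 * esymmOn (u.erase l) k f :=
    sum_nonneg fun l hl => mul_nonneg (sq_nonneg _) (h l hl)
  nlinarith

lemma esymmOn_erase_nonneg {k : ℕ} {u : Finset ι} (hk : k + 1 ≤ #u) {f : ι → ℝ}
    (hf : ∀ j ≤ k + 1, 0 ≤ esymmOn u j f) {i : ι} (hi : i ∈ u) :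
    0 ≤ esymmOn (u.erase i) k f := by
  induction k using Nat.strong_induction_on generalizing u f i with
  | _ k ih =>
    obtain _ | k := k
    · simp
    by_contra! hneg
    have hcard : #(u.erase i) = #u - 1 := card_erase_of_mem hi
    obtain ⟨s, hs, hs0⟩ := exists_pos_esymmOn_add_const_eq_zero (by omega) hneg
    set g : ι → ℝ := fun l => f l + s
    have hg : ∀ j ≤ k + 2, 0 < esymmOn u j g := fun j hj =>
      esymmOn_add_const_pos (by omega) (fun l hl => hf l (by omega)) hs
    have hg' : ∀ j ≤ k + 1, 0 ≤ esymmOn (u.erase i) j g := fun j hj => by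
      obtain hj | rfl := hj.lt_or_eq
      · exact ih j (by omega) (by omega) (fun l hl => (hg l (by omega)).le) hi
      · exact hs0.ge
    have hnonpos : esymmOn (u.erase i) (k + 2) g ≤ 0 :=
      esymmOn_succ_succ_nonpos hs0 fun l hl => ih k (by omega) (by omega) hg' hl
    have := hg (k + 2) le_rfl
    rw [esymmOn_succ_eq_erase hi, hs0, mul_zero, add_zero] at this
    linarith

end ElementarySymmetric

lemma esymm_eq_esymmOn (n k : ℕ) (lam : Fin n → ℝ) : esymm n k lam = esymmOn univ k lam := rfl

lemma mem_closure_gardingCone_iff {n m : ℕ} (hmn : m ≤ n) {lam : Fin n → ℝ} :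
    lam ∈ closure (gardingCone n m) ↔ ∀ k ≤ m, 0 ≤ esymm n k lam := by
  constructor
  · intro h k hk
    obtain rfl | hk0 := k.eq_zero_or_pos
    · simp [esymm_eq_esymmOn]
    refine closure_minimal (t := {x | 0 ≤ esymm n k x}) (fun x hx => (hx k hk0 hk).le) ?_ h
    exact isClosed_le continuous_const (by unfold esymm; fun_prop)
  · intro h
    have hlim : Filter.Tendsto (fun t : ℝ => fun i => lam i + t) (nhdsWithin 0 (Set.Ioi 0))
        (nhds lam) :=
      tendsto_nhdsWithin_of_tendsto_nhds <|
        (by fun_prop : Continuous fun t : ℝ => fun i => lam i + t).tendsto' 0 lam (by simp)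
    refine mem_closure_of_tendsto hlim (eventually_nhdsWithin_of_forall fun t ht k _ hk => ?_)
    exact esymmOn_add_const_pos (by simpa using hk.trans hmn) (fun j hj => h j (hj.trans hk)) ht

namespace Matrix
variable {ι K : Type*} [Fintype ι] [DecidableEq ι] [Field K]

lemma det_diagonal_add_vecMulVec {a : ι → K} (ha : ∀ i, a i ≠ 0) (u v : ι → K) :
    (diagonal a + vecMulVec u v).det
      = ∏ i, a i + ∑ i, u i * v i * ∏ j ∈ univ.erase i, a j := by
  have hdet : IsUnit (diagonal a).det := by
    simpa [det_diagonal, isUnit_iff_ne_zero, prod_ne_zero_iff] using ha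
  have hinv : (diagonal a)⁻¹ = diagonal fun i => (a i)⁻¹ :=
    inv_eq_right_inv (by simp [diagonal_mul_diagonal, ha])
  rw [vecMulVec_eq Unit, det_add_replicateCol_mul_replicateRow hdet, det_diagonal, hinv,
    det_unique]
  simp only [add_apply, one_apply_eq, mul_add, mul_one, Matrix.mul_apply, replicateRow_apply,
    replicateCol_apply, diagonal_apply, mul_ite, mul_zero, sum_ite_eq', mem_univ, if_true,
    mul_sum]
  refine congrArg _ (sum_congr rfl fun i _ => ?_)
  rw [← mul_prod_erase univ a (mem_univ i)]
  field_simp [ha i]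

lemma charpoly_diagonal_add_vecMulVec [Infinite K] (d u v : ι → K) :
    (diagonal d + vecMulVec u v).charpoly
      = ∏ i, (X - C (d i)) - ∑ i, C (u i * v i) * ∏ j ∈ univ.erase i, (X - C (d j)) := by
  refine eq_of_infinite_eval_eq _ _ ((Set.finite_range d).infinite_compl.mono fun x hx => ?_)
  have hx : ∀ i, x - d i ≠ 0 := fun i h => hx ⟨i, (sub_eq_zero.1 h).symm⟩
  have hmat : scalar ι x - (diagonal d + vecMulVec u v)
      = diagonal (fun i => x - d i) + vecMulVec (-u) v := by
    ext i j
    by_cases hij : i = j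
    · subst hij; simp; ring
    · simp [hij]
  rw [Set.mem_ofPred_eq, eval_charpoly, hmat, det_diagonal_add_vecMulVec hx]
  simp [eval_prod, eval_finsetSum, sub_eq_add_neg]

variable {𝕜 : Type*} [RCLike 𝕜]

lemma charpoly_conj_unitary (U : unitary (Matrix ι ι 𝕜)) (N : Matrix ι ι 𝕜) :
    ((star U : Matrix ι ι 𝕜) * N * U).charpoly = N.charpoly := by
  rw [charpoly_mul_comm, ← mul_assoc, Unitary.mul_star_self_of_mem U.2, one_mul]

lemma IsHermitian.charpoly_add_vecMulVec_star {M : Matrix ι ι 𝕜} (hM : M.IsHermitian)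
    (v : ι → 𝕜) :
    (M + vecMulVec v (star v)).charpoly
      = (diagonal (fun i => (hM.eigenvalues i : 𝕜))
          + vecMulVec (star (hM.eigenvectorUnitary : Matrix ι ι 𝕜) *ᵥ v)
            (star (star (hM.eigenvectorUnitary : Matrix ι ι 𝕜) *ᵥ v))).charpoly := by
  set U := hM.eigenvectorUnitary
  have hD := hM.conjStarAlgAut_star_eigenvectorUnitary
  rw [Unitary.conjStarAlgAut_star_apply] at hD
  rw [← charpoly_conj_unitary U, mul_add, add_mul, hD, mul_vecMulVec, vecMulVec_mul, star_mulVec,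
    star_eq_conjTranspose, conjTranspose_conjTranspose]
  rfl

end Matrix

lemma Matrix.IsHermitian.esymm_eigenvalues_add_vecMulVec {n : ℕ} {M : Matrix (Fin n) (Fin n) ℂ}
    (hM : M.IsHermitian) (v : Fin n → ℂ) (hN : (M + vecMulVec v (star v)).IsHermitian) :
    ∃ w : Fin n → ℂ, ∀ k, k + 1 ≤ n → esymm n (k + 1) hN.eigenvalues
      = esymm n (k + 1) hM.eigenvalues
        + ∑ i, ‖w i‖ ^ 2 * esymmOn (univ.erase i) k hM.eigenvalues := by
  refine ⟨star (hM.eigenvectorUnitary : Matrix (Fin n) (Fin n) ℂ) *ᵥ v, fun k hk => ?_⟩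
  have h := congrArg (coeff · (n - (k + 1))) <| hN.charpoly_eq.symm.trans <|
    (hM.charpoly_add_vecMulVec_star v).trans (charpoly_diagonal_add_vecMulVec _ _ _)
  simp only [coeff_sub, finsetSum_coeff, coeff_C_mul, Pi.star_apply, RCLike.star_def,
    RCLike.mul_conj] at h
  rw [coeff_prod_X_sub_C_eq_esymmOn (k := k + 1) _ _ (by simp; omega),
    coeff_prod_X_sub_C_eq_esymmOn (k := k + 1) _ _ (by simp; omega),
    sum_congr rfl fun i _ => by
      rw [coeff_prod_X_sub_C_eq_esymmOn (k := k) _ _ (by simp; omega)]] at h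
  have hcast : ∀ (u : Finset (Fin n)) j (f : Fin n → ℝ),
      esymmOn u j (fun i => (f i : ℂ)) = ((esymmOn u j f : ℝ) : ℂ) :=
    fun u j f => (map_esymmOn Complex.ofRealHom u j f).symm
  simp only [RCLike.ofReal_eq_complex_ofReal, hcast] at h
  simp_rw [mul_left_comm _ ((-1 : ℂ) ^ k), ← mul_sum] at h
  apply Complex.ofReal_injective
  refine mul_left_cancel₀ (pow_ne_zero (k + 1) (by norm_num) : (-1 : ℂ) ^ (k + 1) ≠ 0) ?_
  push_cast [esymm_eq_esymmOn]
  linear_combination h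

lemma eigenvalues_add_vecMulVec_mem_closure_gardingCone {n m : ℕ} (hmn : m ≤ n)
    {M : Matrix (Fin n) (Fin n) ℂ} (hM : M.IsHermitian)
    (hMg : hM.eigenvalues ∈ closure (gardingCone n m)) (v : Fin n → ℂ)
    (hN : (M + vecMulVec v (star v)).IsHermitian) :
    hN.eigenvalues ∈ closure (gardingCone n m) := by
  rw [mem_closure_gardingCone_iff hmn] at hMg ⊢
  obtain ⟨w, hw⟩ := hM.esymm_eigenvalues_add_vecMulVec v hN
  rintro (_ | k) hk
  · simp [esymm_eq_esymmOn]
  rw [hw k (by omega)]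
  refine add_nonneg (hMg _ hk) (sum_nonneg fun i _ => mul_nonneg (sq_nonneg _) ?_)
  exact esymmOn_erase_nonneg (by simp; omega) (fun j hj => hMg j (by omega)) (mem_univ i)

lemma eigenvalues_add_sum_vecMulVec_mem_closure_gardingCone {n m : ℕ} (hmn : m ≤ n)
    {M : Matrix (Fin n) (Fin n) ℂ} (hM : M.IsHermitian)
    (hMg : hM.eigenvalues ∈ closure (gardingCone n m)) {β : Type*} (s : Finset β)
    (v : β → Fin n → ℂ) :
    ∃ h : (M + ∑ j ∈ s, vecMulVec (v j) (star (v j))).IsHermitian,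
      h.eigenvalues ∈ closure (gardingCone n m) := by
  classical
  induction s using Finset.induction_on with
  | empty =>
    rw [sum_empty, add_zero]
    exact ⟨hM, hMg⟩
  | insert j s hj ih =>
    obtain ⟨h, hg⟩ := ih
    have hN := h.add (posSemidef_vecMulVec_self_star (v j)).isHermitian
    rw [sum_insert hj, add_comm (vecMulVec _ _), ← add_assoc]
    exact ⟨hN, eigenvalues_add_vecMulVec_mem_closure_gardingCone hmn h hg (v j) hN⟩

theorem gardingCone_add_posSemidef_general
    (n m : ℕ) (hmn : m ≤ n)
    (A P : Matrix (Fin n) (Fin n) ℂ)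
    (hA : A.IsHermitian)
    (hAg : hA.eigenvalues ∈ closure (gardingCone n m))
    (hP : P.PosSemidef) :
    ∃ h : (A + P).IsHermitian,
      h.eigenvalues ∈ closure (gardingCone n m) := by
  obtain ⟨r, v, rfl⟩ := posSemidef_iff_eq_sum_vecMulVec.mp hP
  exact eigenvalues_add_sum_vecMulVec_mem_closure_gardingCone hmn hA hAg univ v

/-- Adding a positive semidefinite Hermitian matrix preserves the condition
`λ(A) ∈ Γ̄_m` on the eigenvalue vector. -/
theorem gardingCone_add_posSemidef
    (n m : ℕ) (hm : 1 ≤ m) (hmn : m ≤ n)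
    (A P : Matrix (Fin n) (Fin n) ℂ)
    (hA : A.IsHermitian)
    (hAg : hA.eigenvalues ∈ closure (gardingCone n m))
    (hP : P.PosSemidef) :
    ∃ h : (A + P).IsHermitian,
      h.eigenvalues ∈ closure (gardingCone n m) :=
  gardingCone_add_posSemidef_general n m hmn A P hA hAg hP
end
end

section
/- For an n×n complex Hermitian matrix M let F_m(M) := σ_m(λ(M)) (1 ≤ m ≤ n). Let A be Hermitian with λ(A) ∈ Γ̄_m and let B be positive semidefinite Hermitian. Then the function t ↦ F_m(A + tB) is nondecreasing on [0, ∞). -/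
open scoped ComplexOrder

noncomputable section

/-- `F_m(M) = σ_m(λ(M))` for Hermitian `M` (junk value `0` otherwise). -/
def sigmaEigen (n m : ℕ) (A : Matrix (Fin n) (Fin n) ℂ) : ℝ :=
  if h : A.IsHermitian then esymm n m h.eigenvalues else 0

/-!
Diagonalise `M = U diag(λ) U*` and put `Q = U* P U ⪰ 0`. Expanding `det (X + diag λ + Q)` along
the diagonal gives
`σ_j(λ(M + P)) = ∑_S det Q_S · σ_{j - |S|}(λ with the entries indexed by S deleted)`,
whose `S = ∅` term is `σ_j(λ)`. Every term is nonnegative: principal minors of `Q` are, and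
deleting `r` entries of a vector of `Γ̄_m` leaves a vector of `Γ̄_{m-r}`. For the open cone the
latter follows from a minimal-ratio argument and the fact that a real-rooted polynomial with
nonnegative coefficients and positive constant term has positive coefficients (applied to
derivatives of `∏ (X + λ_i)`); it passes to `Γ̄_m` by shifting `λ` by `ε (1, …, 1)`.
Hence adding a positive semidefinite matrix increases `σ_1, …, σ_m` and keeps `λ` in `Γ̄_m`,
so `A + sB` stays in `Γ̄_m` and `F_m(A + tB) ≥ F_m(A + sB)` for `t ≥ s`.
-/

open Polynomial

namespace Multiset

theorem esymm_zero {R : Type*} [CommSemiring R] (μ : Multiset R) : μ.esymm 0 = 1 := by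
  simp [esymm]

theorem esymm_eq_zero_of_card_lt {R : Type*} [CommSemiring R] {μ : Multiset R} {j : ℕ}
    (h : card μ < j) : μ.esymm j = 0 := by
  simp [esymm, powersetCard_eq_empty _ h]

theorem esymm_cons_succ {R : Type*} [CommSemiring R] (a : R) (ν : Multiset R) (j : ℕ) :
    (a ::ₘ ν).esymm (j + 1) = ν.esymm (j + 1) + a * ν.esymm j := by
  simp only [esymm, powersetCard_cons, map_add, sum_add, map_map, Function.comp_def, prod_cons,
    sum_map_mul_left]

theorem esymm_pos_of_forall_pos {R : Type*} [CommRing R] [PartialOrder R]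
    [IsStrictOrderedRing R] {μ : Multiset R} (hμ : ∀ x ∈ μ, 0 < x) {j : ℕ} (hj : j ≤ card μ) :
    0 < μ.esymm j := by
  have hne : powersetCard j μ ≠ ∅ := by
    rw [empty_eq_zero, ← card_pos, card_powersetCard]
    exact Nat.choose_pos hj
  have := sum_lt_sum_of_nonempty hne (f := 0) fun t ht =>
    prod_pos fun x hx => hμ x (mem_of_le (mem_powersetCard.mp ht).1 hx)
  simpa [esymm] using this

theorem esymm_map_add_eq_eval {R : Type*} [CommRing R] (μ : Multiset R) (ε : R) {j : ℕ}
    (hj : j ≤ card μ) :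
    (μ.map (· + ε)).esymm j =
      (hasseDeriv (card μ - j) (μ.map fun r => X + C r).prod).eval ε := by
  have hprod : ((μ.map (· + ε)).map fun r => X + C r).prod =
      taylor ε (μ.map fun r => X + C r).prod := by
    rw [taylor_apply, multiset_prod_comp, map_map, map_map]
    refine congrArg _ (map_congr rfl fun r _ => ?_)
    simp only [Function.comp_apply, add_comp, X_comp, C_comp, C_add]
    ring
  rw [← taylor_coeff, ← hprod, prod_X_add_C_coeff _ (by simp), card_map, Nat.sub_sub_self hj]

theorem prod_X_add_C_eq_prod_X_sub_C_neg {R : Type*} [CommRing R] (μ : Multiset R) :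
    (μ.map fun r => X + C r).prod = ((μ.map Neg.neg).map fun r => X - C r).prod := by
  simp [map_map, sub_eq_add_neg]

theorem natDegree_prod_X_add_C {R : Type*} [CommRing R] [Nontrivial R] (μ : Multiset R) :
    (μ.map fun r => X + C r).prod.natDegree = card μ := by
  rw [prod_X_add_C_eq_prod_X_sub_C_neg, natDegree_multiset_prod_X_sub_C_eq_card, card_map]

theorem card_roots_prod_X_add_C_eq_natDegree {R : Type*} [CommRing R] [IsDomain R]
    (μ : Multiset R) :
    card (μ.map fun r => X + C r).prod.roots = (μ.map fun r => X + C r).prod.natDegree := by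
  rw [natDegree_prod_X_add_C, prod_X_add_C_eq_prod_X_sub_C_neg, roots_multiset_prod_X_sub_C,
    card_map]

end Multiset

namespace Polynomial

theorem card_roots_iterate_derivative {p : ℝ[X]} (hp : Multiset.card p.roots = p.natDegree)
    (k : ℕ) : Multiset.card (derivative^[k] p).roots = (derivative^[k] p).natDegree ∧
      (derivative^[k] p).natDegree = p.natDegree - k := by
  induction k with
  | zero => simpa using hp
  | succ k ih =>
    rw [Function.iterate_succ_apply']
    have := card_roots_le_derivative (derivative^[k] p)
    have := (derivative (derivative^[k] p)).card_roots'
    have := natDegree_derivative_le (derivative^[k] p)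
    omega

theorem coeff_pos_of_card_roots_eq_natDegree {p : ℝ[X]}
    (hroots : Multiset.card p.roots = p.natDegree) (hnonneg : ∀ i, 0 ≤ p.coeff i)
    (h0 : 0 < p.coeff 0) {k : ℕ} (hk : k ≤ p.natDegree) : 0 < p.coeff k := by
  have hneg : ∀ x ∈ p.roots, 0 < -x := by
    intro x hx
    by_contra! hx0
    have hpos : 0 < p.eval x := by
      rw [eval_eq_sum_range]
      exact Finset.sum_pos' (fun i _ => mul_nonneg (hnonneg i) (pow_nonneg (by linarith) i))
        ⟨0, by simp, by simpa using h0⟩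
    exact hpos.ne' (isRoot_of_mem_roots hx)
  have hlead : 0 < p.leadingCoeff :=
    lt_of_le_of_ne (hnonneg _) (leadingCoeff_ne_zero.mpr (by rintro rfl; simp at h0)).symm
  have hesymm : 0 < (p.roots.map Neg.neg).esymm (p.natDegree - k) :=
    Multiset.esymm_pos_of_forall_pos (by simpa only [Multiset.forall_mem_map_iff] using hneg)
      (by simp; omega)
  rw [Multiset.esymm_neg] at hesymm
  rw [coeff_eq_esymm_roots_of_card hroots hk, mul_assoc]
  exact mul_pos hlead hesymm

end Polynomial

namespace Multiset

/-- `μ ∈ Γ̄_m`; the index `j = 0`, where `σ_0 = 1`, is included. -/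
def EsymmNonneg (m : ℕ) (μ : Multiset ℝ) : Prop := ∀ j ≤ m, 0 ≤ μ.esymm j

def EsymmPos (m : ℕ) (μ : Multiset ℝ) : Prop := ∀ j ≤ m, 0 < μ.esymm j

theorem esymmNonneg_zero (μ : Multiset ℝ) : EsymmNonneg 0 μ := by
  rintro j hj
  simp [Nat.le_zero.mp hj, esymm_zero]

theorem EsymmNonneg.coeff_prod_X_add_C_nonneg {m : ℕ} {μ : Multiset ℝ} (h : EsymmNonneg m μ)
    {k : ℕ} (hk : card μ ≤ k + m) : 0 ≤ (μ.map fun r => X + C r).prod.coeff k := by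
  rcases le_or_gt k (card μ) with hkμ | hkμ
  · rw [prod_X_add_C_coeff μ hkμ]
    exact h _ (by omega)
  · rw [coeff_eq_zero_of_natDegree_lt (by rwa [natDegree_prod_X_add_C])]

theorem EsymmNonneg.esymmPos_of_esymm_pos {k : ℕ} {μ : Multiset ℝ} (h : EsymmNonneg k μ)
    (hk : 0 < μ.esymm k) : EsymmPos k μ := by
  have hkμ : k ≤ card μ := by
    by_contra! hlt
    exact hk.ne' (esymm_eq_zero_of_card_lt hlt)
  set p := (μ.map fun r => X + C r).prod
  set P := derivative^[card μ - k] p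
  obtain ⟨hroots, hdeg⟩ :=
    card_roots_iterate_derivative (card_roots_prod_X_add_C_eq_natDegree μ) (card μ - k)
  rw [natDegree_prod_X_add_C] at hdeg
  have hcoeff (i : ℕ) : P.coeff i =
      (i + (card μ - k)).descFactorial (card μ - k) * p.coeff (i + (card μ - k)) := by
    rw [coeff_iterate_derivative, nsmul_eq_mul]
  have hcoeff_esymm {j : ℕ} (hj : j ≤ k) :
      P.coeff (k - j) = (k - j + (card μ - k)).descFactorial (card μ - k) * μ.esymm j := by
    rw [hcoeff, prod_X_add_C_coeff μ (by omega)]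
    congr 2
    omega
  have hP0 : 0 < P.coeff 0 := by
    rw [← Nat.sub_self k, hcoeff_esymm le_rfl]
    exact mul_pos (by exact_mod_cast Nat.descFactorial_pos.mpr (by omega)) hk
  intro j hj
  have hpos := coeff_pos_of_card_roots_eq_natDegree hroots
    (fun i => by
      rw [hcoeff]
      exact mul_nonneg (by positivity) (h.coeff_prod_X_add_C_nonneg (by omega)))
    hP0 (k := k - j) (by omega)
  rw [hcoeff_esymm hj] at hpos
  exact pos_of_mul_pos_right hpos (by positivity)

theorem EsymmPos.of_cons {k : ℕ} {a : ℝ} {ν : Multiset ℝ}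
    (h : EsymmPos (k + 1) (a ::ₘ ν)) : EsymmPos k ν := by
  induction k with
  | zero =>
    rintro j hj
    simp [Nat.le_zero.mp hj, esymm_zero]
  | succ k ih =>
    have hν : EsymmPos k ν := ih fun j hj => h j (by omega)
    intro j hj
    rcases Nat.lt_or_eq_of_le hj with hj | rfl
    · exact hν j (by omega)
    by_contra! hle
    -- Lower `a` by the largest `τ` keeping `σ_1, …, σ_{k+1}` of `(a - τ) ::ₘ ν` nonnegative:
    -- one of them then vanishes while `σ_{k+2}` stays positive.
    obtain ⟨l, hl, hmin⟩ := (Finset.range (k + 1)).exists_min_image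
      (fun i => (a ::ₘ ν).esymm (i + 1) / ν.esymm i) ⟨0, by simp⟩
    rw [Finset.mem_range] at hl
    set τ := (a ::ₘ ν).esymm (l + 1) / ν.esymm l
    have hτ : 0 < τ := div_pos (h _ (by omega)) (hν _ (by omega))
    have hval (i : ℕ) :
        ((a - τ) ::ₘ ν).esymm (i + 1) = (a ::ₘ ν).esymm (i + 1) - τ * ν.esymm i := by
      rw [esymm_cons_succ, esymm_cons_succ]
      ring
    have htop : 0 < ((a - τ) ::ₘ ν).esymm (k + 2) := by
      rw [hval]
      nlinarith [h (k + 2) le_rfl]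
    have hnonneg : EsymmNonneg (k + 2) ((a - τ) ::ₘ ν) := by
      rintro (_ | i) hi
      · simp [esymm_zero]
      rcases Nat.lt_or_eq_of_le hi with hi | hi
      · rw [hval, sub_nonneg, ← le_div_iff₀ (hν i (by omega))]
        exact hmin i (Finset.mem_range.mpr (by omega))
      · rw [hi]
        exact htop.le
    have hl0 := hnonneg.esymmPos_of_esymm_pos htop (l + 1) (by omega)
    rw [hval, div_mul_cancel₀ _ (hν l (by omega)).ne', sub_self] at hl0
    exact hl0.false

theorem EsymmNonneg.esymmPos_map_add {m : ℕ} {μ : Multiset ℝ} (h : EsymmNonneg m μ) {ε : ℝ}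
    (hε : 0 < ε) : EsymmPos (min m (card μ)) (μ.map (· + ε)) := by
  intro j hj
  rw [le_min_iff] at hj
  rw [esymm_map_add_eq_eval μ ε hj.2, eval_eq_sum_range' (n := j + 1)]
  · refine Finset.sum_pos' (fun i _ => ?_) ⟨j, by simp, ?_⟩
    · rw [hasseDeriv_coeff]
      exact mul_nonneg (mul_nonneg (by positivity)
        (h.coeff_prod_X_add_C_nonneg (by omega))) (by positivity)
    · rw [hasseDeriv_coeff, Nat.add_sub_cancel' hj.2, prod_X_add_C_coeff μ le_rfl, Nat.sub_self,
        esymm_zero, mul_one]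
      have : 0 < ((card μ).choose (card μ - j) : ℝ) := by
        exact_mod_cast Nat.choose_pos (Nat.sub_le _ _)
      positivity
  · rw [natDegree_hasseDeriv, natDegree_prod_X_add_C]
    omega

theorem EsymmNonneg.of_cons {m : ℕ} {a : ℝ} {ν : Multiset ℝ}
    (h : EsymmNonneg (m + 1) (a ::ₘ ν)) : EsymmNonneg m ν := by
  intro j hj
  rcases lt_or_ge (card ν) j with hνj | hνj
  · rw [esymm_eq_zero_of_card_lt hνj]
  set q := hasseDeriv (card ν - j) (ν.map fun r => X + C r).prod
  have hq : ∀ ε > 0, 0 < q.eval ε := by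
    intro ε hε
    have hshift := h.esymmPos_map_add hε
    rw [map_cons, card_cons] at hshift
    rw [← esymm_map_add_eq_eval ν ε hνj]
    exact EsymmPos.of_cons (k := j) (fun i hi => hshift i (le_min (by omega) (by omega))) j le_rfl
  have hq0 : 0 ≤ q.eval 0 :=
    ge_of_tendsto (q.continuous.tendsto 0 |>.mono_left nhdsWithin_le_nhds)
      (eventually_nhdsWithin_of_forall (s := Set.Ioi 0) fun ε hε => (hq ε hε).le)
  have h0 := esymm_map_add_eq_eval ν 0 hνj
  simp only [add_zero, map_id'] at h0
  rwa [h0]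

theorem EsymmNonneg.of_add {m : ℕ} {ν : Multiset ℝ} (w : Multiset ℝ)
    (h : EsymmNonneg m (ν + w)) : EsymmNonneg (m - card w) ν := by
  induction w using Multiset.induction generalizing m with
  | empty => simpa using h
  | cons a w ih =>
    rw [add_cons] at h
    rcases m with _ | m
    · simpa using esymmNonneg_zero ν
    · simpa using ih h.of_cons

open Finset in
theorem EsymmNonneg.coeff_prod_compl_nonneg {ι : Type*} [Fintype ι] [DecidableEq ι]
    {lam : ι → ℝ} {m : ℕ} (h : EsymmNonneg m (univ.val.map lam)) (s : Finset ι) {k : ℕ}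
    (hk : Fintype.card ι ≤ k + m) : 0 ≤ (∏ i ∈ sᶜ, (X + C (lam i))).coeff k := by
  have hsplit : univ.val.map lam = sᶜ.val.map lam + s.val.map lam := by
    rw [← Multiset.map_add, ← union_compl s, ← disjUnion_eq_union _ _ disjoint_compl_right,
      disjUnion_val, add_comm]
  rw [hsplit] at h
  rw [prod_eq_multiset_prod, ← Function.comp_def (fun r => X + C r) lam, ← Multiset.map_map]
  refine (h.of_add _).coeff_prod_X_add_C_nonneg ?_
  simp only [Multiset.card_map, card_val, card_compl]
  omega

end Multiset

namespace Matrix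

theorem det_diagonal_add {R n : Type*} [CommRing R] [Fintype n] [DecidableEq n] (d : n → R)
    (Q : Matrix n n R) :
    (diagonal d + Q).det =
      ∑ s : Finset n, (∏ i ∈ sᶜ, d i) * (Q.submatrix (↑) (↑) : Matrix s s R).det := by
  let D := (detRowAlternating : (n → R) [⋀^n]→ₗ[R] R)
  rw [add_comm, det]
  change D ((fun i => Q i) + fun i => diagonal d i) = _
  rw [D.map_add_univ]
  refine Finset.sum_congr rfl fun s _ => ?_
  have hrows : s.piecewise (fun i => Q i) (fun i => diagonal d i) =
      fun i => (if i ∈ s then 1 else d i) • s.piecewise Q.row (1 : Matrix n n R).row i := by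
    funext i j
    by_cases hi : i ∈ s <;> simp [hi, diagonal_apply, one_apply]
  rw [hrows, D.map_smul_univ, smul_eq_mul]
  congr 1
  · rw [Finset.prod_ite, Finset.prod_const_one, one_mul, Finset.filter_not,
      Finset.filter_mem_eq_inter, Finset.univ_inter, Finset.compl_eq_univ_sdiff]
  · exact det_piecewise_one_eq_submatrix_det Q s

open Unitary in
theorem charpoly_conjStarAlgAut {R n : Type*} [CommRing R] [StarRing R] [Fintype n]
    [DecidableEq n] (u : unitary (Matrix n n R)) (N : Matrix n n R) :
    (conjStarAlgAut R _ u N).charpoly = N.charpoly := by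
  rw [conjStarAlgAut_apply, charpoly_mul_comm, ← mul_assoc, coe_star_mul_self, one_mul]

variable {n : Type*} [Fintype n] [DecidableEq n] {M : Matrix n n ℂ}

theorem IsHermitian.charpoly_neg (hM : M.IsHermitian) :
    (-M).charpoly = ∏ i, (X + C (hM.eigenvalues i : ℂ)) := by
  conv_lhs => rw [hM.spectral_theorem, ← map_neg, charpoly_conjStarAlgAut, diagonal_neg,
    charpoly_diagonal]
  simp [sub_eq_add_neg]

open Unitary in
theorem IsHermitian.charpoly_neg_add (hM : M.IsHermitian) (P : Matrix n n ℂ) :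
    (-(M + P)).charpoly = ∑ s : Finset n,
      C (((star (hM.eigenvectorUnitary : Matrix n n ℂ) * P * hM.eigenvectorUnitary).submatrix
        (↑) (↑) : Matrix s s ℂ).det) * ∏ i ∈ sᶜ, (X + C (hM.eigenvalues i : ℂ)) := by
  set U := hM.eigenvectorUnitary
  set Q := star (U : Matrix n n ℂ) * P * U
  have hconj : -(M + P) =
      conjStarAlgAut ℂ _ U (-(diagonal (RCLike.ofReal ∘ hM.eigenvalues) + Q)) := by
    rw [map_neg, map_add, ← hM.spectral_theorem, conjStarAlgAut_apply]
    simp [Q, mul_assoc, ← mul_assoc (U : Matrix n n ℂ) (star U)]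
  have hcharmatrix : charmatrix (-(diagonal (RCLike.ofReal ∘ hM.eigenvalues) + Q)) =
      diagonal (fun i => X + C (hM.eigenvalues i : ℂ)) + Q.map C := by
    ext i j : 1
    by_cases hij : i = j <;> simp [hij]
    ring
  rw [hconj, charpoly_conjStarAlgAut, charpoly, hcharmatrix, det_diagonal_add]
  refine Finset.sum_congr rfl fun s _ => ?_
  rw [mul_comm, submatrix_map, ← RingHom.mapMatrix_apply, ← RingHom.map_det]

end Matrix

theorem esymm_eq_multiset_esymm {n : ℕ} (lam : Fin n → ℝ) (k : ℕ) :
    esymm n k lam = (Finset.univ.val.map lam).esymm k :=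
  (Finset.esymm_map_val lam _ k).symm

theorem esymm_eq_zero_of_lt {n k : ℕ} (lam : Fin n → ℝ) (h : n < k) : esymm n k lam = 0 := by
  rw [esymm_eq_multiset_esymm, Multiset.esymm_eq_zero_of_card_lt (by simpa using h)]

theorem coeff_prod_X_add_C_ofReal {n j : ℕ} (lam : Fin n → ℝ) (hj : j ≤ n) :
    (∏ i, (X + C (lam i : ℂ))).coeff (n - j) = (esymm n j lam : ℂ) := by
  rw [Finset.prod_X_add_C_coeff _ _ (by simp), Finset.card_univ, Fintype.card_fin,
    Nat.sub_sub_self hj, esymm]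
  push_cast
  rfl

theorem esymmNonneg_of_mem_closure_gardingCone {n m : ℕ} {lam : Fin n → ℝ}
    (h : lam ∈ closure (gardingCone n m)) : Multiset.EsymmNonneg m (Finset.univ.val.map lam) := by
  intro j hj
  rw [← esymm_eq_multiset_esymm]
  rcases Nat.eq_zero_or_pos j with rfl | hj0
  · simp [esymm]
  have hclosed : IsClosed {lam : Fin n → ℝ | 0 ≤ esymm n j lam} :=
    isClosed_le continuous_const (by unfold esymm; fun_prop)
  exact closure_minimal (fun lam hlam => (hlam j hj0 hj).le) hclosed h

namespace Matrix.IsHermitian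

open Finset Multiset

variable {n m : ℕ} {M P : Matrix (Fin n) (Fin n) ℂ}

theorem esymm_le_esymm_add (hM : M.IsHermitian) (hP : P.PosSemidef)
    (hspec : EsymmNonneg m (univ.val.map hM.eigenvalues)) {j : ℕ} (hj : j ≤ m) :
    esymm n j hM.eigenvalues ≤ esymm n j (hM.add hP.isHermitian).eigenvalues := by
  rcases lt_or_ge n j with hnj | hjn
  · rw [esymm_eq_zero_of_lt _ hnj, esymm_eq_zero_of_lt _ hnj]
  set U := (hM.eigenvectorUnitary : Matrix (Fin n) (Fin n) ℂ)
  have hQ : (star U * P * U).PosSemidef := hP.conjTranspose_mul_mul_same U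
  set c : Finset (Fin n) → ℂ := fun s =>
    ((star U * P * U).submatrix (↑) (↑) : Matrix s s ℂ).det *
      (∏ i ∈ sᶜ, (X + C (hM.eigenvalues i : ℂ))).coeff (n - j)
  have hsum : (esymm n j (hM.add hP.isHermitian).eigenvalues : ℂ) = ∑ s, c s := by
    rw [← coeff_prod_X_add_C_ofReal _ hjn, ← (hM.add hP.isHermitian).charpoly_neg,
      hM.charpoly_neg_add, finsetSum_coeff]
    simp only [coeff_C_mul, c, U]
  have hc_empty : c ∅ = esymm n j hM.eigenvalues := by
    simp [c, coeff_prod_X_add_C_ofReal _ hjn]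
  have hc_nonneg (s : Finset (Fin n)) : 0 ≤ c s := by
    refine mul_nonneg (hQ.submatrix _).det_nonneg ?_
    have hmap : ∏ i ∈ sᶜ, (X + C (hM.eigenvalues i : ℂ)) =
        (∏ i ∈ sᶜ, (X + C (hM.eigenvalues i))).map Complex.ofRealHom := by
      simp [Polynomial.map_prod]
    rw [hmap, coeff_map]
    exact Complex.zero_le_real.mpr (hspec.coeff_prod_compl_nonneg s (by simp; omega))
  have hle :
      (esymm n j hM.eigenvalues : ℂ) ≤ esymm n j (hM.add hP.isHermitian).eigenvalues := by
    rw [hsum, ← hc_empty]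
    exact single_le_sum (fun s _ => hc_nonneg s) (mem_univ ∅)
  exact_mod_cast hle

theorem esymmNonneg_add (hM : M.IsHermitian) (hP : P.PosSemidef)
    (hspec : EsymmNonneg m (univ.val.map hM.eigenvalues)) :
    EsymmNonneg m (univ.val.map (hM.add hP.isHermitian).eigenvalues) := by
  intro j hj
  have h := hspec j hj
  rw [← esymm_eq_multiset_esymm] at h ⊢
  exact h.trans (hM.esymm_le_esymm_add hP hspec hj)

end Matrix.IsHermitian

theorem sigmaEigen_monotone_add_posSemidef_general
    (n m : ℕ)
    (A B : Matrix (Fin n) (Fin n) ℂ)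
    (hA : A.IsHermitian)
    (hAg : hA.eigenvalues ∈ closure (gardingCone n m))
    (hB : B.PosSemidef) :
    MonotoneOn (fun t : ℝ => sigmaEigen n m (A + t • B)) (Set.Ici 0) := by
  intro s hs t _ hst
  have hsB : (s • B).PosSemidef := hB.smul hs
  have htsB : ((t - s) • B).PosSemidef := hB.smul (sub_nonneg.mpr hst)
  have hAs := hA.add hsB.isHermitian
  have hAt : A + t • B = (A + s • B) + (t - s) • B := by
    rw [add_assoc, ← add_smul, add_sub_cancel]
  show sigmaEigen n m (A + s • B) ≤ sigmaEigen n m (A + t • B)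
  rw [hAt, sigmaEigen, dif_pos hAs, sigmaEigen, dif_pos (hAs.add htsB.isHermitian)]
  exact hAs.esymm_le_esymm_add htsB
    (hA.esymmNonneg_add hsB (esymmNonneg_of_mem_closure_gardingCone hAg)) le_rfl

/-- If `λ(A) ∈ Γ̄_m` and `B` is positive semidefinite, then `t ↦ F_m(A + tB)` is
nondecreasing on `[0, ∞)`. -/
theorem sigmaEigen_monotone_add_posSemidef
    (n m : ℕ) (hm : 1 ≤ m) (hmn : m ≤ n)
    (A B : Matrix (Fin n) (Fin n) ℂ)
    (hA : A.IsHermitian)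
    (hAg : hA.eigenvalues ∈ closure (gardingCone n m))
    (hB : B.PosSemidef) :
    MonotoneOn (fun t : ℝ => sigmaEigen n m (A + t • B)) (Set.Ici 0) :=
  sigmaEigen_monotone_add_posSemidef_general n m A B hA hAg hB
end
end

section
/- There exists a constant c(n) > 0 depending only on n with the following property. Let c₀, c > 0 and let v : ℂⁿ → ℝ be differentiable with ‖∇v(z)‖ ≤ c₀ for every z. Let a, b ∈ ℂ with a ≠ b and z₀' ∈ ℂ^{n−1}, and suppose v(a, z₀') > v(b, z₀') + 2c. Set δ = c/(4c₀) and let E = {(z₁, z') ∈ ℂ × ℂ^{n−1} : dist(z₁, [a,b]) ≤ δ and ‖z' − z₀'‖ ≤ δ}, where [a,b] is the segment in ℂ joining a and b. Then ∫_E |∂v/∂z₁|² dV ≥ c(n) δ^{2n−1} c² / |a − b|. -/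
open MeasureTheory Metric

noncomputable section

/-- The Wirtinger derivative `∂v/∂z₁ = ½(∂v/∂x₁ − i ∂v/∂y₁)` of a real-valued function on
`ℂ × ℂ^{n-1}`, in the first complex coordinate. -/
def wirtingerFst {k : ℕ} (v : ℂ × EuclideanSpace ℂ (Fin k) → ℝ)
    (z : ℂ × EuclideanSpace ℂ (Fin k)) : ℂ :=
  (((fderiv ℝ v z ((1 : ℂ), 0) : ℝ) : ℂ)
    - Complex.I * ((fderiv ℝ v z ((Complex.I : ℂ), 0) : ℝ) : ℂ)) / 2

/-!
Rotate coordinates so that `[a, b]` lies along the real axis of the first factor: with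
`u = (b - a) / |b - a|`, the chart `((s, z'), t) ↦ (a + u (t + s i), z')` maps
`[-δ, δ] × B̄(z₀', δ) × [0, |a - b|]` measure-preservingly into `E`. Along each line
`t ↦ (a + u (t + s i), z')` the endpoints are within `δ` of `(a, z₀')` and `(b, z₀')`, so `v`,
being `c₀`-Lipschitz, drops by at least `c`; the fundamental theorem of calculus and
Cauchy–Schwarz give `c² ≤ |a - b| ∫ (∂ᵤv)²`, and `(∂ᵤv)² ≤ 4 |∂v/∂z₁|²`. Integrating over the
cross-section, of volume `2 δ^{2n-1} vol(B)` with `B` the unit ball of `ℂ^{n-1}`, gives the bound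
with `c(n) = vol(B) / 2`.
-/

open Set

theorem sq_integral_le_measureReal_univ_mul_integral_sq {α : Type*} [MeasurableSpace α]
    {μ : Measure α} [IsFiniteMeasure μ] {g : α → ℝ} (hg : MemLp g 2 μ) :
    (∫ x, g x ∂μ) ^ 2 ≤ μ.real univ * ∫ x, g x ^ 2 ∂μ := by
  set M := μ.real univ
  set I := ∫ x, g x ∂μ
  set J := ∫ x, g x ^ 2 ∂μ
  rcases eq_zero_or_neZero μ with rfl | hμ
  · simp [M, I, J]
  have hM : 0 < M := by
    simp only [M, measureReal_def]
    exact ENNReal.toReal_pos (NeZero.ne _) (measure_ne_top _ _)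
  have hg1 : Integrable g μ := hg.integrable one_le_two
  have hvar : ∫ x, (M * g x - I) ^ 2 ∂μ = M * (M * J - I ^ 2) := by
    have h : ∀ x, (M * g x - I) ^ 2 = M ^ 2 * g x ^ 2 - 2 * M * I * g x + I ^ 2 := fun x => by
      ring
    simp_rw [h]
    rw [integral_add (f := fun x => M ^ 2 * g x ^ 2 - 2 * M * I * g x)
      ((hg.integrable_sq.const_mul _).sub (hg1.const_mul _)) (integrable_const _),
      integral_sub (hg.integrable_sq.const_mul _) (hg1.const_mul _), integral_const_mul,
      integral_const_mul, integral_const, smul_eq_mul]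
    ring
  have : 0 ≤ M * J - I ^ 2 :=
    nonneg_of_mul_nonneg_right (hvar ▸ integral_nonneg fun x => sq_nonneg _) hM
  linarith

theorem sq_sub_le_mul_setIntegral_deriv_sq {φ : ℝ → ℝ} (hφ : Differentiable ℝ φ) {C : ℝ}
    (hC : ∀ t, ‖deriv φ t‖ ≤ C) {a b : ℝ} (hab : a ≤ b) :
    (φ b - φ a) ^ 2 ≤ (b - a) * ∫ t in Icc a b, deriv φ t ^ 2 := by
  have hφ' : MemLp (deriv φ) 2 (volume.restrict (Icc a b)) :=
    .of_bound (measurable_deriv φ).aestronglyMeasurable C (ae_of_all _ hC)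
  have hFTC : ∫ t in Icc a b, deriv φ t = φ b - φ a := by
    rw [integral_Icc_eq_integral_Ioc, ← intervalIntegral.integral_of_le hab]
    exact intervalIntegral.integral_deriv_eq_sub (fun t _ => hφ t)
      ((intervalIntegrable_iff_integrableOn_Ioc_of_le hab).2
        (IntegrableOn.mono_set (hφ'.integrable one_le_two) Ioc_subset_Icc_self))
  have : IsFiniteMeasure (volume.restrict (Icc a b)) :=
    isFiniteMeasure_restrict.2 measure_Icc_lt_top.ne
  simpa [hFTC, Real.volume_Icc, hab] using sq_integral_le_measureReal_univ_mul_integral_sq hφ'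

theorem measureReal_mul_le_setIntegral_of_le_setIntegral_slice {X Y Z : Type*}
    [MeasurableSpace X] [MeasurableSpace Y] [MeasurableSpace Z] {μ : Measure X} {ν : Measure Y}
    {ρ : Measure Z} [SFinite μ] [SFinite ν] {Φ : X × Y ≃ᵐ Z}
    (hΦ : MeasurePreserving Φ (μ.prod ν) ρ) {A : Set X} {B : Set Y} {E : Set Z}
    (hA : MeasurableSet A) (hAμ : μ A ≠ ⊤) (hΦE : Φ '' (A ×ˢ B) ⊆ E) {F : Z → ℝ}
    (hF : ∀ z, 0 ≤ F z) (hFE : IntegrableOn F E ρ) {m : ℝ}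
    (hm : ∀ x ∈ A, m ≤ ∫ y in B, F (Φ (x, y)) ∂ν) :
    μ.real A * m ≤ ∫ z in E, F z ∂ρ := by
  have hint : IntegrableOn (F ∘ Φ) (A ×ˢ B) (μ.prod ν) :=
    ((hΦ.restrict_image_emb Φ.measurableEmbedding _).integrable_comp_emb
      Φ.measurableEmbedding).2 (hFE.mono_set hΦE)
  calc μ.real A * m = ∫ x in A, m ∂μ := by rw [setIntegral_const, smul_eq_mul]
    _ ≤ ∫ x in A, ∫ y in B, F (Φ (x, y)) ∂ν ∂μ :=
        setIntegral_mono_on (integrableOn_const hAμ)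
          (by rw [IntegrableOn, ← Measure.prod_restrict] at hint; exact hint.integral_prod_left)
          hA hm
    _ = ∫ p in A ×ˢ B, F (Φ p) ∂μ.prod ν := (setIntegral_prod _ hint).symm
    _ = ∫ z in Φ '' (A ×ˢ B), F z ∂ρ := (hΦ.setIntegral_image_emb Φ.measurableEmbedding _ _).symm
    _ ≤ ∫ z in E, F z ∂ρ := setIntegral_mono_set hFE (ae_of_all _ hF) hΦE.eventuallyLE

theorem isBounded_setOf_infDist_segment_le {F G : Type*} [NormedAddCommGroup F]
    [NormedSpace ℝ F] [SeminormedAddCommGroup G] (a b : F) (z₀ : G) (δ : ℝ) :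
    Bornology.IsBounded {z : F × G | infDist z.1 (segment ℝ a b) ≤ δ ∧ ‖z.2 - z₀‖ ≤ δ} := by
  have hseg : Bornology.IsBounded (segment ℝ a b) :=
    isBounded_closedBall.subset (segment_subset_closedBall_left a b)
  refine ((isBounded_closedBall (x := a) (r := δ + diam (segment ℝ a b))).prod
    isBounded_closedBall).subset fun z hz => ⟨?_, mem_closedBall_iff_norm.2 hz.2⟩
  exact (dist_le_infDist_add_diam hseg (left_mem_segment ℝ a b)).trans
    (add_le_add_left hz.1 _)

theorem measureReal_Icc_prod_closedBall {F : Type*} [NormedAddCommGroup F] [NormedSpace ℝ F]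
    [MeasurableSpace F] [BorelSpace F] [FiniteDimensional ℝ F] (μ : Measure F) [μ.IsAddHaarMeasure]
    (z₀ : F) {δ : ℝ} (hδ : 0 ≤ δ) :
    (volume.prod μ).real (Icc (-δ) δ ×ˢ closedBall z₀ δ) =
      2 * δ ^ (Module.finrank ℝ F + 1) * μ.real (ball 0 1) := by
  rw [measureReal_def, Measure.prod_prod, Real.volume_Icc, μ.addHaar_closedBall z₀ hδ,
    ENNReal.toReal_mul, ENNReal.toReal_mul, ENNReal.toReal_ofReal (by linarith),
    ENNReal.toReal_ofReal (by positivity), measureReal_def]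
  ring

theorem exists_circle_add_dist_mul_eq (a b : ℂ) : ∃ u : Circle, a + dist a b * u = b :=
  ⟨Circle.exp (b - a).arg, by
    rw [Circle.coe_exp, dist_comm, Complex.dist_eq, Complex.norm_mul_exp_arg_mul_I]
    ring⟩

theorem finrank_real_euclideanSpace_complex (k : ℕ) :
    Module.finrank ℝ (EuclideanSpace ℂ (Fin k)) = 2 * k := by
  rw [← Module.finrank_mul_finrank ℝ ℂ, Complex.finrank_real_complex, finrank_euclideanSpace_fin]

section Wirtinger

variable {k : ℕ} {v : ℂ × EuclideanSpace ℂ (Fin k) → ℝ}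

theorem norm_wirtingerFst_sq (z : ℂ × EuclideanSpace ℂ (Fin k)) :
    ‖wirtingerFst v z‖ ^ 2 =
      (fderiv ℝ v z (1, 0) ^ 2 + fderiv ℝ v z (Complex.I, 0) ^ 2) / 4 := by
  rw [Complex.sq_norm, wirtingerFst, Complex.normSq_div, Complex.normSq_apply,
    Complex.normSq_ofNat]
  simp only [Complex.sub_re, Complex.ofReal_re, Complex.mul_re, Complex.I_re, zero_mul,
    Complex.I_im, Complex.ofReal_im, mul_zero, sub_self, sub_zero, Complex.sub_im, Complex.mul_im,
    one_mul, zero_add, zero_sub, mul_neg, neg_mul, neg_neg]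
  ring

theorem norm_fderiv_apply_le_norm_fderiv (z : ℂ × EuclideanSpace ℂ (Fin k)) {w : ℂ}
    (hw : ‖w‖ = 1) : ‖fderiv ℝ v z (w, 0)‖ ≤ ‖fderiv ℝ v z‖ := by
  simpa [Prod.norm_def, hw] using (fderiv ℝ v z).le_opNorm (w, 0)

theorem norm_wirtingerFst_le (z : ℂ × EuclideanSpace ℂ (Fin k)) :
    ‖wirtingerFst v z‖ ≤ ‖fderiv ℝ v z‖ := by
  have hX := norm_fderiv_apply_le_norm_fderiv (v := v) z (w := 1) (by simp)
  have hY := norm_fderiv_apply_le_norm_fderiv (v := v) z (w := Complex.I) (by simp)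
  rw [Real.norm_eq_abs, ← sq_le_sq₀ (abs_nonneg _) (norm_nonneg _), sq_abs] at hX hY
  refine (sq_le_sq₀ (norm_nonneg _) (norm_nonneg _)).1 ?_
  rw [norm_wirtingerFst_sq]
  linarith [sq_nonneg ‖fderiv ℝ v z‖]

theorem sq_fderiv_apply_le_four_mul_norm_wirtingerFst_sq (z : ℂ × EuclideanSpace ℂ (Fin k))
    (u : Circle) : fderiv ℝ v z ((u : ℂ), 0) ^ 2 ≤ 4 * ‖wirtingerFst v z‖ ^ 2 := by
  have hu : ((u : ℂ), (0 : EuclideanSpace ℂ (Fin k))) =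
      (u : ℂ).re • ((1 : ℂ), 0) + (u : ℂ).im • (Complex.I, 0) := by
    ext <;> simp
  have hnorm : (u : ℂ).re ^ 2 + (u : ℂ).im ^ 2 = 1 := by
    simpa [Complex.normSq_apply, sq] using Circle.normSq_coe u
  rw [hu, map_add, map_smul, map_smul, norm_wirtingerFst_sq, smul_eq_mul, smul_eq_mul]
  nlinarith [sq_nonneg
    ((u : ℂ).re * fderiv ℝ v z (Complex.I, 0) - (u : ℂ).im * fderiv ℝ v z (1, 0))]

theorem measurable_wirtingerFst : Measurable (wirtingerFst v) := by
  unfold wirtingerFst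
  fun_prop

theorem norm_wirtingerFst_sq_le {C : ℝ} (hC : ∀ z, ‖fderiv ℝ v z‖ ≤ C)
    (z : ℂ × EuclideanSpace ℂ (Fin k)) : ‖‖wirtingerFst v z‖ ^ 2‖ ≤ C ^ 2 := by
  rw [norm_pow, norm_norm]
  exact pow_le_pow_left₀ (norm_nonneg _) ((norm_wirtingerFst_le z).trans (hC z)) 2

theorem integrableOn_norm_wirtingerFst_sq {C : ℝ} (hC : ∀ z, ‖fderiv ℝ v z‖ ≤ C)
    {s : Set (ℂ × EuclideanSpace ℂ (Fin k))} (hs : volume s ≠ ⊤) :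
    IntegrableOn (fun z => ‖wirtingerFst v z‖ ^ 2) s :=
  Measure.integrableOn_of_bounded hs (measurable_wirtingerFst.norm.pow_const 2).aestronglyMeasurable
    (ae_of_all _ (norm_wirtingerFst_sq_le hC))

theorem sq_sub_le_four_mul_setIntegral_norm_wirtingerFst_sq (hv : Differentiable ℝ v) {C : ℝ}
    (hC : ∀ z, ‖fderiv ℝ v z‖ ≤ C) (p : ℂ × EuclideanSpace ℂ (Fin k)) (u : Circle) {L : ℝ}
    (hL : 0 ≤ L) :
    (v (p + L • ((u : ℂ), 0)) - v p) ^ 2 ≤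
      4 * L * ∫ t in Icc 0 L, ‖wirtingerFst v (p + t • ((u : ℂ), 0))‖ ^ 2 := by
  set w : ℂ × EuclideanSpace ℂ (Fin k) := ((u : ℂ), 0)
  have hφ : ∀ t : ℝ, HasDerivAt (fun t : ℝ => v (p + t • w)) (fderiv ℝ v (p + t • w) w) t :=
    fun t => (hv _).hasFDerivAt.comp_hasDerivAt t
      (by simpa using ((hasDerivAt_id t).smul_const w).const_add p)
  have hderiv : deriv (fun t : ℝ => v (p + t • w)) = fun t => fderiv ℝ v (p + t • w) w :=
    funext fun t => (hφ t).deriv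
  have hline := sq_sub_le_mul_setIntegral_deriv_sq (fun t => (hφ t).differentiableAt)
    (fun t => by
      rw [hderiv]; exact (norm_fderiv_apply_le_norm_fderiv _ (Circle.norm_coe u)).trans (hC _)) hL
  have hint : IntegrableOn (fun t => 4 * ‖wirtingerFst v (p + t • w)‖ ^ 2) (Icc 0 L) := by
    refine (Measure.integrableOn_of_bounded measure_Icc_lt_top.ne ?_
      (ae_of_all _ fun t => norm_wirtingerFst_sq_le hC _)).const_mul 4
    exact ((measurable_wirtingerFst.comp (by fun_prop)).norm.pow_const 2).aestronglyMeasurable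
  calc (v (p + L • w) - v p) ^ 2
      ≤ L * ∫ t in Icc 0 L, fderiv ℝ v (p + t • w) w ^ 2 := by simpa [hderiv] using hline
    _ ≤ L * ∫ t in Icc 0 L, 4 * ‖wirtingerFst v (p + t • w)‖ ^ 2 :=
        mul_le_mul_of_nonneg_left (integral_mono_of_nonneg (ae_of_all _ fun t => sq_nonneg _) hint
          (ae_of_all _ fun t => sq_fderiv_apply_le_four_mul_norm_wirtingerFst_sq _ u)) hL
    _ = _ := by rw [integral_const_mul]; ring

end Wirtinger

section TubeChart

variable {E : Type*} [MeasurableSpace E]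

def tubeChart (a : ℂ) (u : Circle) : (ℝ × E) × ℝ ≃ᵐ ℂ × E :=
  (MeasurableEquiv.prodComm.trans MeasurableEquiv.prodAssoc.symm).trans
    (MeasurableEquiv.prodCongr
      (Complex.measurableEquivRealProd.symm.trans
        ((rotation u).toMeasurableEquiv.trans (MeasurableEquiv.addLeft a)))
      (MeasurableEquiv.refl E))

@[simp]
theorem tubeChart_apply (a : ℂ) (u : Circle) (s t : ℝ) (z : E) :
    tubeChart a u ((s, z), t) = (a + u * (t + s * Complex.I), z) := by
  refine Prod.ext ?_ rfl
  change a + rotation u ⟨t, s⟩ = _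
  rw [rotation_apply, Complex.mk_eq_add_mul_I]

theorem measurePreserving_tubeChart (a : ℂ) (u : Circle) (μ : Measure E) [SFinite μ] :
    MeasurePreserving (tubeChart a u) ((volume.prod μ).prod volume) (volume.prod μ) := by
  have hrot : MeasurePreserving (Complex.measurableEquivRealProd.symm.trans
      ((rotation u).toMeasurableEquiv.trans (MeasurableEquiv.addLeft a))) :=
    ((measurePreserving_add_left volume a).comp (rotation u).measurePreserving).comp
      (Complex.volume_preserving_equiv_real_prod.symm _)
  exact (hrot.prod (.id μ)).comp
    ((measurePreserving_prodAssoc volume volume μ).symm _ |>.comp Measure.measurePreserving_swap)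

theorem dist_tubeChart_le [PseudoMetricSpace E] {a : ℂ} {u : Circle} {z₀ z : E} {δ s : ℝ}
    (hs : s ∈ Icc (-δ) δ) (hz : z ∈ closedBall z₀ δ) (t : ℝ) :
    dist (tubeChart a u ((s, z), t)) (a + t * u, z₀) ≤ δ := by
  rw [tubeChart_apply, Prod.dist_eq, max_le_iff, Complex.dist_eq,
    show a + u * (t + s * Complex.I) - (a + t * u) = u * (s * Complex.I) by ring]
  simpa [Circle.norm_coe, abs_le] using And.intro hs hz

theorem image_tubeChart_subset [SeminormedAddCommGroup E] (a : ℂ) (u : Circle) (z₀ : E)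
    {δ L : ℝ} (hL : 0 < L) :
    tubeChart a u '' ((Icc (-δ) δ ×ˢ closedBall z₀ δ) ×ˢ Icc 0 L) ⊆
      {z | infDist z.1 (segment ℝ a (a + L * u)) ≤ δ ∧ ‖z.2 - z₀‖ ≤ δ} := by
  rintro _ ⟨⟨⟨s, z⟩, t⟩, ⟨⟨hs, hz⟩, ht⟩, rfl⟩
  have hd := dist_tubeChart_le (a := a) (u := u) hs hz t
  rw [Prod.dist_eq, max_le_iff] at hd
  have hseg : a + t * u ∈ segment ℝ a (a + L * u) := by
    rw [segment_eq_image']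
    refine ⟨t / L, ⟨div_nonneg ht.1 hL.le, (div_le_one hL).2 ht.2⟩, ?_⟩
    have hL' : (L : ℂ) ≠ 0 := by exact_mod_cast hL.ne'
    simp only [add_sub_cancel_left, Complex.real_smul, Complex.ofReal_div]
    field_simp
  exact ⟨(infDist_le_dist_of_mem hseg).trans hd.1, by simpa [dist_eq_norm] using hd.2⟩

end TubeChart

theorem sq_div_le_setIntegral_norm_wirtingerFst_sq_tubeChart {k : ℕ}
    {v : ℂ × EuclideanSpace ℂ (Fin k) → ℝ} (hv : Differentiable ℝ v) {c₀ c δ : ℝ}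
    (hvb : ∀ z, ‖fderiv ℝ v z‖ ≤ c₀) (hc : 0 ≤ c) (hδ : 2 * (c₀ * δ) ≤ c) {a b : ℂ} {L : ℝ}
    (hL : 0 < L) {u : Circle} (hb : a + L * u = b) {z₀ : EuclideanSpace ℂ (Fin k)}
    (hgap : v (b, z₀) + 2 * c < v (a, z₀)) {x : ℝ × EuclideanSpace ℂ (Fin k)}
    (hx : x ∈ Icc (-δ) δ ×ˢ closedBall z₀ δ) :
    c ^ 2 / (4 * L) ≤ ∫ t in Icc 0 L, ‖wirtingerFst v (tubeChart a u (x, t))‖ ^ 2 := by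
  obtain ⟨s, z⟩ := x
  have hc₀ : 0 ≤ c₀ := (norm_nonneg _).trans (hvb 0)
  have hend : ∀ t : ℝ, |v (tubeChart a u ((s, z), t)) - v (a + t * u, z₀)| ≤ c₀ * δ := fun t => by
    have := convex_univ.norm_image_sub_le_of_norm_fderiv_le (fun z _ => hv z) (fun z _ => hvb z)
      (mem_univ (a + t * u, z₀)) (mem_univ (tubeChart a u ((s, z), t)))
    rw [← dist_eq_norm, ← dist_eq_norm] at this
    exact this.trans (mul_le_mul_of_nonneg_left (dist_tubeChart_le hx.1 hx.2 t) hc₀)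
  have h0 := abs_le.1 (hend 0)
  have hL' := abs_le.1 (hend L)
  simp only [Complex.ofReal_zero, zero_mul, add_zero, hb] at h0 hL'
  have hline := sq_sub_le_four_mul_setIntegral_norm_wirtingerFst_sq hv hvb
    (a + u * (s * Complex.I), z) u hL.le
  have hpath : ∀ t : ℝ, (a + u * (s * Complex.I), z) + t • ((u : ℂ), 0) =
      tubeChart a u ((s, z), t) := fun t => by
    ext <;> simp; ring
  simp only [hpath] at hline
  rw [show (a + u * (s * Complex.I), z) = tubeChart a u ((s, z), 0) by simp] at hline
  have hdrop : c ≤ v (tubeChart a u ((s, z), 0)) - v (tubeChart a u ((s, z), L)) := by linarith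
  rw [div_le_iff₀ (by positivity)]
  nlinarith

/-- The key integral lower bound in the Liouville proof: if `‖∇v‖ ≤ c₀` everywhere and
`v(a,z₀') > v(b,z₀') + 2c`, then with `δ = c/(4c₀)` the integral of `|∂v/∂z₁|²` over the
`δ`-neighborhood `E` of `[a,b] × {z₀'}` is at least `c(n)·δ^{2n-1}·c²/|a−b|`. -/
theorem integral_wirtinger_sq_lower_bound
    (n : ℕ) (hn : 1 ≤ n) :
    ∃ C : ℝ, 0 < C ∧
      ∀ (c₀ c : ℝ), 0 < c₀ → 0 < c →
        ∀ v : ℂ × EuclideanSpace ℂ (Fin (n - 1)) → ℝ,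
          Differentiable ℝ v →
          (∀ z, ‖fderiv ℝ v z‖ ≤ c₀) →
          ∀ (a b : ℂ) (z₀' : EuclideanSpace ℂ (Fin (n - 1))),
            a ≠ b →
            v (b, z₀') + 2 * c < v (a, z₀') →
            C * (c / (4 * c₀)) ^ (2 * n - 1) * c ^ 2 / dist a b ≤
              ∫ z in {z : ℂ × EuclideanSpace ℂ (Fin (n - 1)) |
                  infDist z.1 (segment ℝ a b) ≤ c / (4 * c₀) ∧
                    ‖z.2 - z₀'‖ ≤ c / (4 * c₀)},
                ‖wirtingerFst v z‖ ^ 2 := by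
  set B := ball (0 : EuclideanSpace ℂ (Fin (n - 1))) 1
  refine ⟨volume.real B / 2, half_pos <| ENNReal.toReal_pos (measure_ball_pos _ _ one_pos).ne'
    measure_ball_lt_top.ne, ?_⟩
  intro c₀ c hc₀ hc v hv hvb a b z₀' hab hgap
  set δ := c / (4 * c₀) with hδ_def
  have hδ : 0 < δ := by positivity
  have hδc : 2 * (c₀ * δ) ≤ c := by
    rw [hδ_def]
    field_simp
    linarith
  have hL : 0 < dist a b := dist_pos.2 hab
  obtain ⟨u, hb⟩ := exists_circle_add_dist_mul_eq a b
  have hA : (volume.prod volume) (Icc (-δ) δ ×ˢ closedBall z₀' δ) ≠ ⊤ := by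
    rw [Measure.prod_prod]
    exact ENNReal.mul_ne_top measure_Icc_lt_top.ne measure_closedBall_lt_top.ne
  calc volume.real B / 2 * δ ^ (2 * n - 1) * c ^ 2 / dist a b
      = (volume.prod volume).real (Icc (-δ) δ ×ˢ closedBall z₀' δ) *
          (c ^ 2 / (4 * dist a b)) := by
        rw [measureReal_Icc_prod_closedBall _ _ hδ.le, finrank_real_euclideanSpace_complex,
          show 2 * (n - 1) + 1 = 2 * n - 1 by omega]
        field_simp
        ring
    _ ≤ _ := measureReal_mul_le_setIntegral_of_le_setIntegral_slice
        (measurePreserving_tubeChart a u volume) (measurableSet_Icc.prod measurableSet_closedBall)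
        hA (by simpa only [hb] using image_tubeChart_subset (δ := δ) a u z₀' hL)
        (fun z => sq_nonneg _)
        (integrableOn_norm_wirtingerFst_sq hvb
          (isBounded_setOf_infDist_segment_le a b z₀' δ).measure_lt_top.ne)
        fun x hx => sq_div_le_setIntegral_norm_wirtingerFst_sq_tubeChart hv hvb hc.le hδc hL hb
          hgap hx
end
end
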